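/- arXiv:2010.05214 — 6 statements merged into one kernel-verified Lean document; each statement's English description precedes it below -/
import Mathlib

section
/- Let N' and h be positive integers, let A be a linear endomorphism of ℝ^{N'}, let B : ℝ^h → ℝ^{N'} be a linear map, and let D be a linear endomorphism of ℝ^h satisfying D^s = id for some integer s ≥ 1. Let λ > 1 be a real number and let u₊ ∈ ℝ^{N'} satisfy ‖u₊‖ = 1 and A u₊ = λ·u₊. Assume that for every u ∈ ℝ^{N'} there is a real number a(u) such that λ^{−n}·A^n(u) → a(u)·u₊ as n → ∞. Define E : ℝ^{N'} × ℝ^h → ℝ^{N'} × ℝ^h by E(u,v) = (A u + B v, D v). Then for every (u,v) ∈ ℝ^{N'} × ℝ^h the series Σ_{k=0}^∞ λ^{−(k+1)}·a(B(D^k v)) converges, and λ^{−n}·E^n(u,v) converges to c·(u₊, 0), where c := a(u) + Σ_{k=0}^∞ λ^{−(k+1)}·a(B(D^k v)). Moreover, if c > 0 then the normalized iterates ‖E^n(u,v)‖^{−1}·E^n(u,v) converge to (u₊, 0). -/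
open Filter Topology Finset

/-!
Iterating `E(u, v) = (A u + B v, D v)` gives
`Eⁿ(u, v) = (Aⁿ u + ∑_{k<n} A^(n-1-k) (B (Dᵏ v)), Dⁿ v)`.
Since `D` has finite order, the vectors `B (Dᵏ v)` range over a finite set, so the rescaled
sequences `λ^{-m} Aᵐ (B (Dᵏ v))` are bounded uniformly in `k`. After multiplying by `λ^{-n}`,
the `k`-th summand is `λ^{-(k+1)}` times such a sequence at time `n - 1 - k`, and dominated
convergence against the geometric series `∑ λ^{-(k+1)}` yields the limit of the first component;
the second component `λ^{-n} Dⁿ v` is bounded times `λ^{-n}`, hence tends to `0`.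
-/

lemma Module.End.finite_range_pow_apply {R N : Type*} [Semiring R] [AddCommMonoid N]
    [Module R N] {D : Module.End R N} (hD : IsOfFinOrder D) (v : N) :
    (Set.range fun k : ℕ => (D ^ k) v).Finite :=
  (hD.finite_powers.image fun f => f v).subset <| by
    rintro _ ⟨k, rfl⟩
    exact ⟨D ^ k, ⟨k, rfl⟩, rfl⟩

lemma iterate_blockTriangular_apply {R M N : Type*} [Semiring R] [AddCommMonoid M] [AddCommMonoid N]
    [Module R M] [Module R N] (A : Module.End R M) (B : N →ₗ[R] M) (D : Module.End R N)
    {E : M × N → M × N} (hE : ∀ p, E p = (A p.1 + B p.2, D p.2)) (u : M) (v : N) (n : ℕ) :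
    E^[n] (u, v) = ((A ^ n) u + ∑ k ∈ range n, (A ^ (n - 1 - k)) (B ((D ^ k) v)), (D ^ n) v) := by
  induction n with
  | zero => simp
  | succ n ih =>
    have hshift : ∀ k ∈ range n,
        A ((A ^ (n - 1 - k)) (B ((D ^ k) v))) = (A ^ (n + 1 - 1 - k)) (B ((D ^ k) v)) := by
      intro k hk
      rw [← Module.End.mul_apply, ← pow_succ', show n - 1 - k + 1 = n + 1 - 1 - k by
        have := mem_range.1 hk; omega]
    rw [Function.iterate_succ_apply', ih, hE, map_add, map_sum, sum_congr rfl hshift,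
      sum_range_succ, pow_succ', pow_succ', Module.End.mul_apply, Module.End.mul_apply]
    simp [add_assoc]

section Bounds

variable {F : Type*} [SeminormedAddCommGroup F]

lemma exists_norm_le_of_finite_range {w : ℕ → F} (hw : (Set.range w).Finite) :
    ∃ C, ∀ k, ‖w k‖ ≤ C := by
  obtain ⟨C, hC⟩ := isBounded_iff_forall_norm_le.1 hw.isBounded
  exact ⟨C, fun k => hC _ ⟨k, rfl⟩⟩

lemma exists_norm_le_of_tendsto_of_finite_range {V : Type*} {g : V → ℕ → F}
    (hg : ∀ z, ∃ l, Tendsto (g z) atTop (𝓝 l)) {w : ℕ → V} (hw : (Set.range w).Finite) :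
    ∃ C, ∀ k m, ‖g (w k) m‖ ≤ C := by
  have hbdd : Bornology.IsBounded (⋃ z ∈ Set.range w, Set.range (g z)) :=
    (Bornology.isBounded_biUnion hw).2 fun z _ =>
      let ⟨_, hl⟩ := hg z; Metric.isBounded_range_of_tendsto _ hl
  obtain ⟨C, hC⟩ := isBounded_iff_forall_norm_le.1 hbdd
  exact ⟨C, fun k m => hC _ (Set.mem_biUnion ⟨k, rfl⟩ ⟨m, rfl⟩)⟩

end Bounds

section Geometric

variable {r : ℝ} (hr₀ : 0 ≤ r) (hr₁ : r < 1)
include hr₀ hr₁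

lemma summable_pow_succ_mul (C : ℝ) : Summable fun k : ℕ => r ^ (k + 1) * C :=
  (((summable_geometric_of_lt_one hr₀ hr₁).mul_right r).mul_right C).congr fun k => by
    rw [pow_succ]

variable {F : Type*} [NormedAddCommGroup F] [NormedSpace ℝ F] [CompleteSpace F]

lemma summable_pow_succ_smul_of_norm_le {y : ℕ → F} {C : ℝ} (hy : ∀ k, ‖y k‖ ≤ C) :
    Summable fun k : ℕ => r ^ (k + 1) • y k :=
  (summable_pow_succ_mul hr₀ hr₁ C).of_norm_bounded fun k => by
    rw [norm_smul, Real.norm_of_nonneg (by positivity)]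
    exact mul_le_mul_of_nonneg_left (hy k) (by positivity)

lemma tendsto_sum_range_pow_succ_smul {x : ℕ → ℕ → F} {L : ℕ → F} {C : ℝ}
    (hx : ∀ k, Tendsto (x k) atTop (𝓝 (L k))) (hC : ∀ k m, ‖x k m‖ ≤ C) :
    Tendsto (fun n => ∑ k ∈ range n, r ^ (k + 1) • x k (n - 1 - k)) atTop
      (𝓝 (∑' k, r ^ (k + 1) • L k)) := by
  set f : ℕ → ℕ → F := fun n k => if k < n then r ^ (k + 1) • x k (n - 1 - k) else 0
  have hf_tsum : ∀ n, ∑' k, f n k = ∑ k ∈ range n, r ^ (k + 1) • x k (n - 1 - k) := fun n =>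
    (tsum_eq_sum fun k hk => if_neg (by simpa using hk)).trans
      (sum_congr rfl fun k hk => if_pos (mem_range.1 hk))
  have hf_lim : ∀ k, Tendsto (f · k) atTop (𝓝 (r ^ (k + 1) • L k)) := fun k => by
    have hshift : Tendsto (fun n => n - 1 - k) atTop atTop := by
      simpa only [Nat.sub_sub] using tendsto_sub_atTop_nat (1 + k)
    refine (((hx k).comp hshift).const_smul _).congr' ?_
    filter_upwards [eventually_gt_atTop k] with n hn
    exact (if_pos hn).symm
  have hf_bound : ∀ n k, ‖f n k‖ ≤ r ^ (k + 1) * C := fun n k => by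
    by_cases hk : k < n
    · rw [show f n k = _ from if_pos hk, norm_smul, Real.norm_of_nonneg (by positivity)]
      exact mul_le_mul_of_nonneg_left (hC k _) (by positivity)
    · rw [show f n k = 0 from if_neg hk, norm_zero]
      exact mul_nonneg (by positivity) ((norm_nonneg _).trans (hC 0 0))
  simpa only [hf_tsum] using tendsto_tsum_of_dominated_convergence
    (summable_pow_succ_mul hr₀ hr₁ C) hf_lim (Eventually.of_forall hf_bound)

lemma tendsto_pow_smul_sum_range_pow_apply {A : Module.End ℝ F} {p : F} {a : F → ℝ}
    (ha : ∀ z, Tendsto (fun m : ℕ => r ^ m • (A ^ m) z) atTop (𝓝 (a z • p)))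
    {w : ℕ → F} (hw : (Set.range w).Finite) :
    Tendsto (fun n : ℕ => r ^ n • ∑ k ∈ range n, (A ^ (n - 1 - k)) (w k)) atTop
      (𝓝 ((∑' k : ℕ, r ^ (k + 1) * a (w k)) • p)) := by
  obtain ⟨C, hC⟩ := exists_norm_le_of_tendsto_of_finite_range (fun z => ⟨_, ha z⟩) hw
  obtain ⟨Ca, hCa⟩ := exists_norm_le_of_finite_range (Set.range_comp' a w ▸ hw.image a)
  have hsplit : ∀ n, r ^ n • ∑ k ∈ range n, (A ^ (n - 1 - k)) (w k) =
      ∑ k ∈ range n, r ^ (k + 1) • (r ^ (n - 1 - k) • (A ^ (n - 1 - k)) (w k)) := fun n => by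
    rw [smul_sum]
    refine sum_congr rfl fun k hk => ?_
    rw [smul_smul, ← pow_add, show k + 1 + (n - 1 - k) = n by have := mem_range.1 hk; omega]
  have hlim : ∑' k : ℕ, r ^ (k + 1) • (a (w k) • p) = (∑' k : ℕ, r ^ (k + 1) * a (w k)) • p := by
    simp_rw [smul_smul]
    exact (summable_pow_succ_smul_of_norm_le hr₀ hr₁ hCa).tsum_smul_const p
  simpa only [hsplit, hlim] using tendsto_sum_range_pow_succ_smul hr₀ hr₁ (fun k => ha (w k)) hC

end Geometric

lemma tendsto_normalize_of_tendsto_smul {F : Type*} [NormedAddCommGroup F] [NormedSpace ℝ F]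
    {r : ℕ → ℝ} {x : ℕ → F} {y : F} (hr : ∀ n, 0 < r n) (hy : y ≠ 0)
    (hxy : Tendsto (fun n => r n • x n) atTop (𝓝 y)) :
    Tendsto (fun n => NormedSpace.normalize (x n)) atTop (𝓝 (NormedSpace.normalize y)) := by
  exact ((hxy.norm.inv₀ (norm_ne_zero_iff.2 hy)).smul hxy).congr fun n =>
    NormedSpace.normalize_smul_of_pos (hr n) (x n)

theorem stmt_0_general (N' h : ℕ)
    (A : EuclideanSpace ℝ (Fin N') →ₗ[ℝ] EuclideanSpace ℝ (Fin N'))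
    (B : EuclideanSpace ℝ (Fin h) →ₗ[ℝ] EuclideanSpace ℝ (Fin N'))
    (D : EuclideanSpace ℝ (Fin h) →ₗ[ℝ] EuclideanSpace ℝ (Fin h))
    (s : ℕ) (hs : 1 ≤ s) (hD : D ^ s = LinearMap.id)
    (lam : ℝ) (hlam : 1 < lam)
    (uplus : EuclideanSpace ℝ (Fin N')) (hnorm : ‖uplus‖ = 1)
    (a : EuclideanSpace ℝ (Fin N') → ℝ)
    (ha : ∀ u, Tendsto (fun n : ℕ => (lam⁻¹) ^ n • (A ^ n) u) atTop (𝓝 (a u • uplus)))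
    (E : EuclideanSpace ℝ (Fin N') × EuclideanSpace ℝ (Fin h) →
         EuclideanSpace ℝ (Fin N') × EuclideanSpace ℝ (Fin h))
    (hE : ∀ p, E p = (A p.1 + B p.2, D p.2))
    (u : EuclideanSpace ℝ (Fin N')) (v : EuclideanSpace ℝ (Fin h)) :
    Summable (fun k : ℕ => (lam⁻¹) ^ (k + 1) * a (B ((D ^ k) v))) ∧
    Tendsto (fun n : ℕ => (lam⁻¹) ^ n • E^[n] (u, v)) atTop
      (𝓝 ((a u + ∑' k : ℕ, (lam⁻¹) ^ (k + 1) * a (B ((D ^ k) v))) • (uplus, 0))) ∧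
    (0 < a u + ∑' k : ℕ, (lam⁻¹) ^ (k + 1) * a (B ((D ^ k) v)) →
      Tendsto (fun n : ℕ => ‖E^[n] (u, v)‖⁻¹ • E^[n] (u, v)) atTop (𝓝 (uplus, 0))) := by
  have hr₀ : 0 ≤ lam⁻¹ := by positivity
  have hr₁ : lam⁻¹ < 1 := inv_lt_one_of_one_lt₀ hlam
  have horbit := Module.End.finite_range_pow_apply
    (isOfFinOrder_iff_pow_eq_one.2 ⟨s, hs, hD⟩) v
  have hw : (Set.range fun k => B ((D ^ k) v)).Finite := Set.range_comp' B _ ▸ horbit.image B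
  obtain ⟨Ca, hCa⟩ := exists_norm_le_of_finite_range (Set.range_comp' a _ ▸ hw.image a)
  obtain ⟨Cv, hCv⟩ := exists_norm_le_of_finite_range horbit
  have hfst := (ha u).add (tendsto_pow_smul_sum_range_pow_apply hr₀ hr₁ ha hw)
  have hsnd : Tendsto (fun n : ℕ => (lam⁻¹) ^ n • (D ^ n) v) atTop (𝓝 0) :=
    (tendsto_pow_atTop_nhds_zero_of_lt_one hr₀ hr₁).zero_smul_isBoundedUnder_le
      (isBoundedUnder_of ⟨Cv, hCv⟩)
  have hlim : Tendsto (fun n : ℕ => (lam⁻¹) ^ n • E^[n] (u, v)) atTop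
      (𝓝 ((a u + ∑' k : ℕ, (lam⁻¹) ^ (k + 1) * a (B ((D ^ k) v))) • (uplus, 0))) := by
    simp_rw [iterate_blockTriangular_apply A B D hE, Prod.smul_mk, smul_zero, smul_add, add_smul]
    exact hfst.prodMk_nhds hsnd
  refine ⟨summable_pow_succ_smul_of_norm_le hr₀ hr₁ hCa, hlim, fun hc => ?_⟩
  have hunit : ‖((uplus, 0) : EuclideanSpace ℝ (Fin N') × EuclideanSpace ℝ (Fin h))‖ = 1 := by
    simp [Prod.norm_def, hnorm]
  have hnormalize := tendsto_normalize_of_tendsto_smul (fun n => by positivity)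
    (smul_ne_zero hc.ne' (norm_ne_zero_iff.1 (hunit.trans_ne one_ne_zero))) hlim
  rwa [NormedSpace.normalize_smul_of_pos hc,
    NormedSpace.normalize_eq_self_of_norm_eq_one hunit] at hnormalize

/-- Lemma 7.2 of the paper: block upper-triangular dynamics with finite-order
bottom block and Perron-like top block. -/
theorem stmt_0 (N' h : ℕ) (hN' : 0 < N') (hh : 0 < h)
    (A : EuclideanSpace ℝ (Fin N') →ₗ[ℝ] EuclideanSpace ℝ (Fin N'))
    (B : EuclideanSpace ℝ (Fin h) →ₗ[ℝ] EuclideanSpace ℝ (Fin N'))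
    (D : EuclideanSpace ℝ (Fin h) →ₗ[ℝ] EuclideanSpace ℝ (Fin h))
    (s : ℕ) (hs : 1 ≤ s) (hD : D ^ s = LinearMap.id)
    (lam : ℝ) (hlam : 1 < lam)
    (uplus : EuclideanSpace ℝ (Fin N')) (hnorm : ‖uplus‖ = 1)
    (hAu : A uplus = lam • uplus)
    (a : EuclideanSpace ℝ (Fin N') → ℝ)
    (ha : ∀ u, Tendsto (fun n : ℕ => (lam⁻¹) ^ n • (A ^ n) u) atTop (𝓝 (a u • uplus)))
    (E : EuclideanSpace ℝ (Fin N') × EuclideanSpace ℝ (Fin h) →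
         EuclideanSpace ℝ (Fin N') × EuclideanSpace ℝ (Fin h))
    (hE : ∀ p, E p = (A p.1 + B p.2, D p.2))
    (u : EuclideanSpace ℝ (Fin N')) (v : EuclideanSpace ℝ (Fin h)) :
    Summable (fun k : ℕ => (lam⁻¹) ^ (k + 1) * a (B ((D ^ k) v))) ∧
    Tendsto (fun n : ℕ => (lam⁻¹) ^ n • E^[n] (u, v)) atTop
      (𝓝 ((a u + ∑' k : ℕ, (lam⁻¹) ^ (k + 1) * a (B ((D ^ k) v))) • (uplus, 0))) ∧
    (0 < a u + ∑' k : ℕ, (lam⁻¹) ^ (k + 1) * a (B ((D ^ k) v)) →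
      Tendsto (fun n : ℕ => ‖E^[n] (u, v)‖⁻¹ • E^[n] (u, v)) atTop (𝓝 (uplus, 0))) :=
  stmt_0_general N' h A B D s hs hD lam hlam uplus hnorm a ha E hE u v
end

section
/- Let I be a finite set, B = (b_{ij}) a real I×I matrix and k ∈ I, and set B' := μ_k B. For a vector x ∈ ℝ^I with all entries positive, define the vector T_B(x) by (T_B x)_k = x_k^{−1} and (T_B x)_i = x_i·(1 + x_k^{−sgn(b_{ik})})^{−b_{ik}} for i ≠ k (real powers of positive reals). Then T_B(x) again has all entries positive, and T_{B'}(T_B(x)) = x for every positive x; that is, the cluster X-transformation is involutive. -/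
open Matrix

/-- Matrix mutation in direction `k`. -/
noncomputable def matMut {I : Type*} [DecidableEq I] (B : Matrix I I ℝ) (k : I) :
    Matrix I I ℝ :=
  Matrix.of fun i j =>
    if i = k ∨ j = k then -B i j
    else B i j + max (B i k) 0 * max (B k j) 0 - max (-B i k) 0 * max (-B k j) 0

/-- The cluster X-transformation in direction `k` (on positive real points). -/
noncomputable def Xtrans {I : Type*} [DecidableEq I] (B : Matrix I I ℝ) (k : I)
    (x : I → ℝ) : I → ℝ :=
  fun i => if i = k then (x k)⁻¹
    else x i * (1 + x k ^ (-Real.sign (B i k))) ^ (-(B i k))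

theorem Real.inv_rpow_neg_sign_neg {t : ℝ} (ht : 0 ≤ t) (b : ℝ) :
    t⁻¹ ^ (-Real.sign (-b)) = t ^ (-Real.sign b) := by
  rw [Real.sign_neg, neg_neg, Real.inv_rpow ht, ← Real.rpow_neg ht]

theorem one_add_rpow_neg_sign_pos {t : ℝ} (ht : 0 < t) (b : ℝ) : 0 < 1 + t ^ (-Real.sign b) :=
  add_pos one_pos (Real.rpow_pos_of_pos ht _)

section ClusterX

variable {I : Type*} [DecidableEq I]

theorem matMut_apply_col_self (B : Matrix I I ℝ) (k i : I) : matMut B k i k = -B i k := by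
  simp [matMut]

variable (B : Matrix I I ℝ) (k : I) (x : I → ℝ)

theorem Xtrans_apply_self : Xtrans B k x k = (x k)⁻¹ := by
  simp [Xtrans]

theorem Xtrans_apply_of_ne {i : I} (hi : i ≠ k) :
    Xtrans B k x i = x i * (1 + x k ^ (-Real.sign (B i k))) ^ (-(B i k)) := by
  simp [Xtrans, hi]

theorem Xtrans_pos (hx : ∀ i, 0 < x i) (i : I) : 0 < Xtrans B k x i := by
  by_cases hi : i = k
  · rw [hi, Xtrans_apply_self]
    exact inv_pos.mpr (hx k)
  · rw [Xtrans_apply_of_ne B k x hi]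
    exact mul_pos (hx i) (Real.rpow_pos_of_pos (one_add_rpow_neg_sign_pos (hx k) _) _)

end ClusterX

theorem stmt_9_general {I : Type*} [DecidableEq I] (B : Matrix I I ℝ) (k : I) :
    ∀ x : I → ℝ, (∀ i, 0 < x i) →
      (∀ i, 0 < Xtrans B k x i) ∧ Xtrans (matMut B k) k (Xtrans B k x) = x := by
  intro x hx
  refine ⟨Xtrans_pos B k x hx, funext fun i => ?_⟩
  by_cases hi : i = k
  · subst hi
    rw [Xtrans_apply_self, Xtrans_apply_self, inv_inv]
  · -- mutation negates column `k`, so the second factor is the inverse of the first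
    have hF := one_add_rpow_neg_sign_pos (hx k) (B i k)
    rw [Xtrans_apply_of_ne _ k _ hi, Xtrans_apply_of_ne B k x hi, Xtrans_apply_self,
      matMut_apply_col_self, Real.inv_rpow_neg_sign_neg (hx k).le, neg_neg,
      Real.rpow_neg hF.le, inv_mul_cancel_right₀ (Real.rpow_pos_of_pos hF _).ne']

/-- The cluster X-transformation preserves positivity and is involutive. -/
theorem stmt_9 {I : Type*} [Fintype I] [DecidableEq I] (B : Matrix I I ℝ) (k : I) :
    ∀ x : I → ℝ, (∀ i, 0 < x i) →
      (∀ i, 0 < Xtrans B k x i) ∧ Xtrans (matMut B k) k (Xtrans B k x) = x :=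
  stmt_9_general B k
end

section
/- Let I be a finite set, B = (b_{ij}) a skew-symmetric real I×I matrix and k ∈ I, and set B' := μ_k B. For a vector a ∈ ℝ^I with all entries positive, define the vector S_B(a) by (S_B a)_i = a_i for i ≠ k and (S_B a)_k = a_k^{−1}·( Π_{j∈I} a_j^{[b_{kj}]_+} + Π_{j∈I} a_j^{[−b_{kj}]_+} ) (real powers of positive reals). Then S_B(a) again has all entries positive, and S_{B'}(S_B(a)) = a for every positive a; that is, the cluster A-transformation is involutive. -/
open Matrix

/-- The cluster A-transformation in direction `k` (on positive real points). -/
noncomputable def Atrans {I : Type*} [Fintype I] [DecidableEq I] (B : Matrix I I ℝ) (k : I)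
    (a : I → ℝ) : I → ℝ :=
  fun i => if i = k then
      (a k)⁻¹ * ((∏ j, a j ^ max (B k j) 0) + (∏ j, a j ^ max (-B k j) 0))
    else a i

/-! Proof idea: the mutation only flips the sign of row `k` of `B`, so it swaps the two monomials of
the exchange binomial `∏ aⱼ^[b_kj]₊ + ∏ aⱼ^[-b_kj]₊`. Since `b_kk = 0`, that binomial does not
involve `a_k`, hence it takes the same value `E` at `a` and at `S_B a`. So the second
transformation sends `a_k⁻¹ E` back to `(a_k⁻¹ E)⁻¹ E = a_k`. -/

section

variable {I : Type*}

theorem diag_eq_zero_of_transpose_eq_neg {B : Matrix I I ℝ} (hB : Bᵀ = -B) (k : I) :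
    B k k = 0 := by
  have h := congrFun (congrFun hB k) k
  rw [transpose_apply, neg_apply] at h
  linarith

theorem matMut_apply_self_left [DecidableEq I] (B : Matrix I I ℝ) (k j : I) :
    matMut B k k j = -B k j := by
  simp [matMut]

noncomputable def exchangeBinomial [Fintype I] (B : Matrix I I ℝ) (k : I) (a : I → ℝ) :
    ℝ :=
  (∏ j, a j ^ max (B k j) 0) + ∏ j, a j ^ max (-B k j) 0

theorem exchangeBinomial_pos [Fintype I] (B : Matrix I I ℝ) (k : I) {a : I → ℝ}
    (ha : ∀ i, 0 < a i) :
    0 < exchangeBinomial B k a :=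
  add_pos (Finset.prod_pos fun j _ => Real.rpow_pos_of_pos (ha j) _)
    (Finset.prod_pos fun j _ => Real.rpow_pos_of_pos (ha j) _)

theorem Atrans_apply_self [Fintype I] [DecidableEq I] (B : Matrix I I ℝ) (k : I) (a : I → ℝ) :
    Atrans B k a k = (a k)⁻¹ * exchangeBinomial B k a :=
  if_pos rfl

theorem Atrans_apply_of_ne [Fintype I] [DecidableEq I] (B : Matrix I I ℝ) {k i : I} (a : I → ℝ)
    (hi : i ≠ k) :
    Atrans B k a i = a i :=
  if_neg hi

theorem Atrans_pos [Fintype I] [DecidableEq I] (B : Matrix I I ℝ) (k : I) {a : I → ℝ}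
    (ha : ∀ i, 0 < a i) (i : I) :
    0 < Atrans B k a i := by
  by_cases hi : i = k
  · subst hi
    rw [Atrans_apply_self]
    exact mul_pos (inv_pos.2 (ha i)) (exchangeBinomial_pos B i ha)
  · rw [Atrans_apply_of_ne B a hi]
    exact ha i

theorem prod_rpow_Atrans [Fintype I] [DecidableEq I] (B : Matrix I I ℝ) (k : I) (a : I → ℝ)
    {e : I → ℝ} (he : e k = 0) :
    ∏ j, Atrans B k a j ^ e j = ∏ j, a j ^ e j := by
  refine Finset.prod_congr rfl fun j _ => ?_
  by_cases hj : j = k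
  · rw [hj, he, Real.rpow_zero, Real.rpow_zero]
  · rw [Atrans_apply_of_ne B a hj]

theorem exchangeBinomial_matMut_Atrans [Fintype I] [DecidableEq I] {B : Matrix I I ℝ} {k : I}
    (hkk : B k k = 0) (a : I → ℝ) :
    exchangeBinomial (matMut B k) k (Atrans B k a) = exchangeBinomial B k a := by
  simp only [exchangeBinomial, matMut_apply_self_left, neg_neg]
  rw [prod_rpow_Atrans B k a (e := fun j => max (-B k j) 0) (by simp [hkk]),
    prod_rpow_Atrans B k a (e := fun j => max (B k j) 0) (by simp [hkk]), add_comm]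

end

/-- The cluster A-transformation preserves positivity and is involutive. -/
theorem stmt_10 {I : Type*} [Fintype I] [DecidableEq I] (B : Matrix I I ℝ)
    (hB : Bᵀ = -B) (k : I) :
    ∀ a : I → ℝ, (∀ i, 0 < a i) →
      (∀ i, 0 < Atrans B k a i) ∧ Atrans (matMut B k) k (Atrans B k a) = a := by
  intro a ha
  refine ⟨Atrans_pos B k ha, funext fun i => ?_⟩
  by_cases hi : i = k
  · subst hi
    have hE := (exchangeBinomial_pos B i ha).ne'
    rw [Atrans_apply_self, exchangeBinomial_matMut_Atrans (diag_eq_zero_of_transpose_eq_neg hB i),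
      Atrans_apply_self]
    field_simp
  · rw [Atrans_apply_of_ne _ _ hi, Atrans_apply_of_ne _ _ hi]
end

section
/- Fix an integer ℓ ≥ 2 and let F, λ_± and L_± be as in the Kronecker setting. Then F(L_+) = λ_+·L_+ and F(L_−) = λ_−·L_−. Moreover these are the only eigenrays of the piecewise-linear map F: if w ∈ ℝ² is nonzero and F(w) = μ·w for some real number μ, then w = t·L_+ or w = t·L_− for some t > 0. -/
/-!
On the open half-plane `x₁ > 0` the map `F` is the linear map `(x₁, x₂) ↦ (ℓ x₁ + x₂, -x₁)`,
whose eigenvectors `(1, y)` are cut out by `y² + ℓ y + 1 = 0`, with eigenvalue `ℓ + y`; the two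
roots give `L_±` and `λ_±`. On the half-plane `x₁ ≤ 0` it is the rotation `(x₁, x₂) ↦ (x₂, -x₁)`
by a right angle, which has no real eigenvector. Since `F` is positively homogeneous, every
eigenvector is a positive multiple of some `(1, y)`.
-/

namespace KroneckerTropical

def tropMap (ℓ : ℝ) (p : ℝ × ℝ) : ℝ × ℝ := (ℓ * max p.1 0 + p.2, -p.1)

variable {ℓ : ℝ}

lemma tropMap_smul {t : ℝ} (ht : 0 ≤ t) (p : ℝ × ℝ) :
    tropMap ℓ (t • p) = t • tropMap ℓ p := by
  have hmax : max (t * p.1) 0 = t * max p.1 0 := by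
    rw [mul_max_of_nonneg _ _ ht, mul_zero]
  simp only [tropMap, Prod.smul_fst, Prod.smul_snd, smul_eq_mul, Prod.smul_mk, hmax]
  ext <;> ring

lemma tropMap_one_mk_eq_smul_iff {y μ : ℝ} :
    tropMap ℓ (1, y) = μ • (1, y) ↔ μ = ℓ + y ∧ y * y + ℓ * y + 1 = 0 := by
  simp only [tropMap, max_eq_left zero_le_one, Prod.smul_mk, smul_eq_mul, mul_one,
    Prod.mk.injEq]
  constructor
  · rintro ⟨rfl, hy⟩
    exact ⟨rfl, by linear_combination -hy⟩
  · rintro ⟨rfl, hy⟩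
    exact ⟨by ring, by linear_combination -hy⟩

lemma eq_zero_of_tropMap_eq_smul_of_nonpos {w : ℝ × ℝ} {μ : ℝ} (hw : w.1 ≤ 0)
    (h : tropMap ℓ w = μ • w) : w = 0 := by
  simp only [tropMap, max_eq_right hw, mul_zero, zero_add, Prod.ext_iff, Prod.smul_fst,
    Prod.smul_snd, smul_eq_mul] at h
  obtain ⟨h₁, h₂⟩ := h
  have hw₁ : w.1 * (1 + μ ^ 2) = 0 := by linear_combination -μ * h₁ - h₂
  have hw₁ : w.1 = 0 := (mul_eq_zero.mp hw₁).resolve_right (by positivity)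
  exact Prod.ext hw₁ (by simpa [hw₁] using h₁)

lemma exists_pos_smul_one_mk_of_tropMap_eq_smul {w : ℝ × ℝ} {μ : ℝ} (hw : w ≠ 0)
    (h : tropMap ℓ w = μ • w) :
    ∃ t : ℝ, 0 < t ∧ ∃ y : ℝ, w = t • ((1 : ℝ), y) ∧ y * y + ℓ * y + 1 = 0 := by
  have ht : 0 < w.1 := by
    by_contra! hw₁
    exact hw (eq_zero_of_tropMap_eq_smul_of_nonpos hw₁ h)
  have hw_eq : w = w.1 • ((1 : ℝ), w.2 / w.1) := by
    ext <;> simp [mul_div_cancel₀ _ ht.ne']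
  refine ⟨w.1, ht, w.2 / w.1, hw_eq, (tropMap_one_mk_eq_smul_iff (μ := μ)).mp ?_ |>.2⟩
  rw [hw_eq, tropMap_smul ht.le, smul_comm] at h
  exact smul_right_injective _ ht.ne' h

end KroneckerTropical

open KroneckerTropical in
/-- The rays through `L₊` and `L₋` are precisely the eigenrays of the tropicalized
Kronecker mutation loop `F(x₁,x₂) = (ℓ·max(x₁,0) + x₂, −x₁)`, with eigenvalues
`λ₊` and `λ₋`. -/
theorem stmt_15 (ℓ : ℤ) (hℓ : 2 ≤ ℓ) (F : ℝ × ℝ → ℝ × ℝ)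
    (hF : ∀ p : ℝ × ℝ, F p = ((ℓ : ℝ) * max p.1 0 + p.2, -p.1))
    (lamp lamm : ℝ)
    (hlamp : lamp = ((ℓ : ℝ) + Real.sqrt ((ℓ : ℝ) ^ 2 - 4)) / 2)
    (hlamm : lamm = ((ℓ : ℝ) - Real.sqrt ((ℓ : ℝ) ^ 2 - 4)) / 2)
    (Lp Lm : ℝ × ℝ)
    (hLp : Lp = (1, (-(ℓ : ℝ) + Real.sqrt ((ℓ : ℝ) ^ 2 - 4)) / 2))
    (hLm : Lm = (1, (-(ℓ : ℝ) - Real.sqrt ((ℓ : ℝ) ^ 2 - 4)) / 2)) :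
    F Lp = lamp • Lp ∧ F Lm = lamm • Lm ∧
    ∀ (w : ℝ × ℝ) (μ : ℝ), w ≠ 0 → F w = μ • w →
      ∃ t : ℝ, 0 < t ∧ (w = t • Lp ∨ w = t • Lm) := by
  obtain rfl : F = tropMap ℓ := funext hF
  have hℓ' : (2 : ℝ) ≤ ℓ := by exact_mod_cast hℓ
  have hdiscrim : discrim 1 (ℓ : ℝ) 1 = √((ℓ : ℝ) ^ 2 - 4) * √((ℓ : ℝ) ^ 2 - 4) := by
    rw [Real.mul_self_sqrt (by nlinarith), discrim]
    ring
  have hroots (y : ℝ) := quadratic_eq_zero_iff one_ne_zero hdiscrim y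
  simp only [one_mul, mul_one] at hroots
  subst hlamp hlamm hLp hLm
  refine ⟨tropMap_one_mk_eq_smul_iff.mpr ⟨by ring, (hroots _).mpr (.inl rfl)⟩,
    tropMap_one_mk_eq_smul_iff.mpr ⟨by ring, (hroots _).mpr (.inr rfl)⟩, ?_⟩
  intro w μ hw h
  obtain ⟨t, ht, y, rfl, hy⟩ := exists_pos_smul_one_mk_of_tropMap_eq_smul hw h
  exact ⟨t, ht, ((hroots y).mp hy).imp (by rintro rfl; rfl) (by rintro rfl; rfl)⟩
end

section
/- Fix an integer ℓ ≥ 2 and let F, C and L_− be as in the Kronecker setting. Then for every w ∈ ℝ² that is not a nonnegative multiple of L_−, there exists n ≥ 0 such that the n-th iterate F^n(w) lies in C. (Since F is linear on C with matrix [[ℓ,1],[−1,0]], this is the sign stability of the Kronecker mutation loop on all of ℝ², with stable sign (+).) -/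
/-!
Suppose the orbit `pₙ = Fⁿ w = (xₙ, yₙ)` never meets `C`. A point with `x < 0` reaches `C` in one
or two steps, so every `xₙ ≥ 0`; then `F` acts linearly along the orbit, `yₙ₊₁ = -xₙ`, and leaving
`C` means `xₙ₊₁ < xₙ`. Thus `xₙ` is a nonnegative decreasing solution of
`xₙ₊₂ = ℓ xₙ₊₁ - xₙ`. Along such a solution `xₙ₊₁ - λ₋ xₙ = λ₊ⁿ (x₁ - λ₋ x₀)`, and since `λ₊ ≥ 1`
this quantity can be neither negative (then `xₙ` drops by a fixed amount at every step) nor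
positive (then it grows without bound, while it stays below `(1 - λ₋) x₀`). Hence `x₁ = λ₋ x₀`,
which says that `w` is a nonnegative multiple of `L₋`.
-/

namespace Kronecker

noncomputable def lamPlus (ℓ : ℝ) : ℝ := (ℓ + √(ℓ ^ 2 - 4)) / 2

noncomputable def lamMinus (ℓ : ℝ) : ℝ := (ℓ - √(ℓ ^ 2 - 4)) / 2

def map (ℓ : ℝ) (p : ℝ × ℝ) : ℝ × ℝ := (ℓ * max p.1 0 + p.2, -p.1)

def cone : Set (ℝ × ℝ) := {p | 0 ≤ p.1 ∧ 0 ≤ p.1 + p.2}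

section Eigenvalues

variable {ℓ : ℝ}

theorem lamPlus_add_lamMinus (ℓ : ℝ) : lamPlus ℓ + lamMinus ℓ = ℓ := by
  unfold lamPlus lamMinus; ring

theorem lamPlus_mul_lamMinus (hℓ : 2 ≤ ℓ) : lamPlus ℓ * lamMinus ℓ = 1 := by
  have hs : √(ℓ ^ 2 - 4) ^ 2 = ℓ ^ 2 - 4 := Real.sq_sqrt (by nlinarith)
  unfold lamPlus lamMinus
  linear_combination -hs / 4

theorem lamMinus_le_one (hℓ : 2 ≤ ℓ) : lamMinus ℓ ≤ 1 := by
  have hs : (ℓ - 2) ^ 2 ≤ ℓ ^ 2 - 4 := by nlinarith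
  have : ℓ - 2 ≤ √(ℓ ^ 2 - 4) := Real.le_sqrt_of_sq_le hs
  unfold lamMinus; linarith

theorem one_le_lamPlus (hℓ : 2 ≤ ℓ) : 1 ≤ lamPlus ℓ := by
  linarith [lamPlus_add_lamMinus ℓ, lamMinus_le_one hℓ]

theorem lamMinus_sub_self (ℓ : ℝ) : lamMinus ℓ - ℓ = (-ℓ - √(ℓ ^ 2 - 4)) / 2 := by
  unfold lamMinus; ring

end Eigenvalues

section Recurrence

variable {x : ℕ → ℝ}

theorem sub_mul_eq_pow_mul {a b : ℝ} (hrec : ∀ n, x (n + 2) = (a + b) * x (n + 1) - a * b * x n)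
    (n : ℕ) : x (n + 1) - b * x n = a ^ n * (x 1 - b * x 0) := by
  induction n with
  | zero => simp
  | succ n ih => rw [hrec, pow_succ']; linear_combination a * ih

theorem exists_neg_of_le_sub {ε : ℝ} (hε : 0 < ε) (hstep : ∀ n, x (n + 1) ≤ x n - ε) :
    ∃ n, x n < 0 := by
  have hlin : ∀ n : ℕ, x n ≤ x 0 - n * ε := by
    intro n
    induction n with
    | zero => simp
    | succ n ih => push_cast; linarith [hstep n]
  obtain ⟨n, hn⟩ := exists_nat_gt (x 0 / ε)
  rw [div_lt_iff₀ hε] at hn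
  exact ⟨n, by linarith [hlin n]⟩

theorem eq_lamMinus_mul_of_antitone {ℓ : ℝ} (hℓ : 2 ≤ ℓ) (hnonneg : ∀ n, 0 ≤ x n)
    (hanti : Antitone x) (hrec : ∀ n, x (n + 2) = ℓ * x (n + 1) - x n) :
    x 1 = lamMinus ℓ * x 0 := by
  set u := x 1 - lamMinus ℓ * x 0
  have hu : ∀ n, x (n + 1) - lamMinus ℓ * x n = lamPlus ℓ ^ n * u := by
    refine sub_mul_eq_pow_mul fun n => ?_
    rw [lamPlus_add_lamMinus, lamPlus_mul_lamMinus hℓ, one_mul]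
    exact hrec n
  have hle : lamMinus ℓ ≤ 1 := lamMinus_le_one hℓ
  rcases lt_trichotomy u 0 with hneg | hzero | hpos
  · have hstep : ∀ n, x (n + 1) ≤ x n - -u := fun n => by
      have hpow : lamPlus ℓ ^ n * u ≤ u :=
        mul_le_of_one_le_left hneg.le (one_le_pow₀ (one_le_lamPlus hℓ))
      have hmul : lamMinus ℓ * x n ≤ x n := mul_le_of_le_one_left (hnonneg n) hle
      linarith [hu n]
    obtain ⟨n, hn⟩ := exists_neg_of_le_sub (neg_pos.mpr hneg) hstep
    exact absurd (hnonneg n) hn.not_ge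
  · linarith
  · have hbound : ∀ n, lamPlus ℓ ^ n * u ≤ (1 - lamMinus ℓ) * x 0 := fun n => by
      have h1 : x (n + 1) ≤ x n := hanti n.le_succ
      have h2 : (1 - lamMinus ℓ) * x n ≤ (1 - lamMinus ℓ) * x 0 :=
        mul_le_mul_of_nonneg_left (hanti n.zero_le) (by linarith)
      linarith [hu n]
    have hlt : lamMinus ℓ < 1 := by
      by_contra! h
      nlinarith [hbound 0, hnonneg 0]
    have hgt : 1 < lamPlus ℓ := by linarith [lamPlus_add_lamMinus ℓ]
    obtain ⟨n, hn⟩ := pow_unbounded_of_one_lt ((1 - lamMinus ℓ) * x 0 / u) hgt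
    rw [div_lt_iff₀ hpos] at hn
    linarith [hbound n]

end Recurrence

section Orbits

variable {ℓ : ℝ} {p w : ℝ × ℝ}

theorem map_of_nonneg (hp : 0 ≤ p.1) : map ℓ p = (ℓ * p.1 + p.2, -p.1) := by
  simp [map, hp]

theorem map_of_nonpos (hp : p.1 ≤ 0) : map ℓ p = (p.2, -p.1) := by
  simp [map, hp]

theorem exists_iterate_mem_cone_of_fst_neg (hp : p.1 < 0) : ∃ n, (map ℓ)^[n] p ∈ cone := by
  have h1 : map ℓ p = (p.2, -p.1) := map_of_nonpos hp.le
  by_cases hp2 : 0 ≤ p.2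
  · refine ⟨1, ?_⟩
    rw [Function.iterate_one, h1]
    exact ⟨hp2, by dsimp only; linarith⟩
  · have h2 : map ℓ (p.2, -p.1) = (-p.1, -p.2) := map_of_nonpos (le_of_not_ge hp2)
    refine ⟨2, ?_⟩
    rw [Function.iterate_succ_apply', Function.iterate_one, h1, h2]
    exact ⟨by dsimp only; linarith, by dsimp only; linarith⟩

theorem fst_iterate_nonneg (hout : ∀ n, (map ℓ)^[n] w ∉ cone) (n : ℕ) :
    0 ≤ ((map ℓ)^[n] w).1 := by
  by_contra! hneg
  obtain ⟨m, hm⟩ := exists_iterate_mem_cone_of_fst_neg hneg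
  rw [← Function.iterate_add_apply] at hm
  exact hout _ hm

theorem iterate_succ_of_forall_not_mem_cone (hout : ∀ n, (map ℓ)^[n] w ∉ cone) (n : ℕ) :
    (map ℓ)^[n + 1] w = (ℓ * ((map ℓ)^[n] w).1 + ((map ℓ)^[n] w).2, -((map ℓ)^[n] w).1) := by
  rw [Function.iterate_succ_apply', map_of_nonneg (fst_iterate_nonneg hout n)]

-- `(1, λ₋ - ℓ)` is the vector `L₋`.
theorem exists_nonneg_smul_of_forall_not_mem_cone (hout : ∀ n, (map ℓ)^[n] w ∉ cone)
    (hℓ : 2 ≤ ℓ) :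
    ∃ t : ℝ, 0 ≤ t ∧ w = t • ((1 : ℝ), lamMinus ℓ - ℓ) := by
  set x : ℕ → ℝ := fun n => ((map ℓ)^[n] w).1
  have hsucc := iterate_succ_of_forall_not_mem_cone hout
  have hnonneg : ∀ n, 0 ≤ x n := fst_iterate_nonneg hout
  have hsnd : ∀ n, ((map ℓ)^[n + 1] w).2 = -x n := fun n => by rw [hsucc]
  have hfst : ∀ n, x (n + 1) = ℓ * x n + ((map ℓ)^[n] w).2 := fun n => by
    simp only [x, hsucc]
  have hanti : Antitone x := antitone_nat_of_succ_le fun n => by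
    have h : ¬(0 ≤ x (n + 1) ∧ 0 ≤ x (n + 1) + ((map ℓ)^[n + 1] w).2) := hout (n + 1)
    linarith [not_le.mp (not_and.mp h (hnonneg (n + 1))), hsnd n]
  have hrec : ∀ n, x (n + 2) = ℓ * x (n + 1) - x n := fun n => by
    rw [hfst, hsnd]; ring
  have hx1 := eq_lamMinus_mul_of_antitone hℓ hnonneg hanti hrec
  have hw2 : w.2 = x 1 - ℓ * x 0 := by rw [hfst 0]; simp [x]
  refine ⟨w.1, hnonneg 0, Prod.ext (by simp) ?_⟩
  simp only [Prod.smul_mk, smul_eq_mul, hw2, hx1]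
  change _ = x 0 * _
  ring

end Orbits

end Kronecker

open Kronecker in
/-- Sign stability of the Kronecker mutation loop: every orbit off the ray `ℝ≥0·L₋`
eventually enters the invariant cone `C = {x₁ ≥ 0, x₁ + x₂ ≥ 0}`. -/
theorem stmt_16 (ℓ : ℤ) (hℓ : 2 ≤ ℓ) (F : ℝ × ℝ → ℝ × ℝ)
    (hF : ∀ p : ℝ × ℝ, F p = ((ℓ : ℝ) * max p.1 0 + p.2, -p.1))
    (Lm : ℝ × ℝ)
    (hLm : Lm = (1, (-(ℓ : ℝ) - Real.sqrt ((ℓ : ℝ) ^ 2 - 4)) / 2)) :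
    ∀ w : ℝ × ℝ, (¬ ∃ t : ℝ, 0 ≤ t ∧ w = t • Lm) →
      ∃ n : ℕ, 0 ≤ (F^[n] w).1 ∧ 0 ≤ (F^[n] w).1 + (F^[n] w).2 := by
  obtain rfl : F = map ℓ := funext hF
  intro w hw
  by_contra! hout
  refine hw ?_
  rw [hLm, ← lamMinus_sub_self]
  exact exists_nonneg_smul_of_forall_not_mem_cone (fun n hn => (hout n hn.1).not_ge hn.2)
    (by exact_mod_cast hℓ)
end

section
/- Fix an integer ℓ > 2 and let F and L_± be as in the Kronecker setting. Then for every w ∈ ℝ² that is not a nonnegative multiple of L_−, the normalized iterates ‖F^n(w)‖^{−1}·F^n(w) converge to ‖L_+‖^{−1}·L_+ as n → ∞ (the attracting half of the North–South dynamics of the Kronecker mutation loop on the projectivized tropical X-variety). -/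
/-!
On the half-plane `0 ≤ w 0` the map `F` is linear, with eigenvalues `λ₊ > 1 > λ₋ = λ₊⁻¹` and
eigenvectors `L₊`, `L₋`. Every orbit eventually stays in that half-plane: either it never leaves
it, or a point with `w 0 < 0` is rotated into the cone `C` within two steps, and `C` is
`F`-invariant because `ℓ ≥ 2`. From then on `Fⁿ v = λ₊ⁿ a L₊ + λ₋ⁿ b L₋`, whose direction tends
to `L₊` as soon as `a > 0`. The coefficient `a` cannot be negative, since the first coordinate
would eventually become negative; and if `a = 0` the orbit has landed on the ray `ℝ≥0 L₋`, whose
preimage under `F` lies in it again, so `w` was on that ray.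
-/

open Filter Topology Set

theorem tendsto_normalize_pow_smul_add_pow_smul {V : Type*} [NormedAddCommGroup V]
    [NormedSpace ℝ V] {u : V} (hu : u ≠ 0) (v : V) {c d : ℝ} (hdc : |d| < c) :
    Tendsto (fun n : ℕ => NormedSpace.normalize (c ^ n • u + d ^ n • v)) atTop
      (𝓝 (NormedSpace.normalize u)) := by
  have hc : 0 < c := (abs_nonneg d).trans_lt hdc
  have hratio : Tendsto (fun n : ℕ => (d / c) ^ n) atTop (𝓝 0) :=
    tendsto_pow_atTop_nhds_zero_of_abs_lt_one (by rwa [abs_div, abs_of_pos hc, div_lt_one hc])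
  have hperturb : Tendsto (fun n : ℕ => u + (d / c) ^ n • v) atTop (𝓝 u) := by
    simpa using tendsto_const_nhds.add (hratio.smul_const v)
  have hcont : ContinuousAt NormedSpace.normalize u :=
    (continuousAt_id.norm.inv₀ (norm_ne_zero_iff.mpr hu)).smul continuousAt_id
  refine (hcont.tendsto.comp hperturb).congr fun n => ?_
  rw [Function.comp_apply, ← NormedSpace.normalize_smul_of_pos (pow_pos hc n), smul_add, smul_smul,
    ← mul_pow, mul_div_cancel₀ _ hc.ne']

theorem nonneg_of_forall_nonneg_pow_mul_add {μ a b : ℝ} (hμ : 1 < μ)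
    (h : ∀ n : ℕ, 0 ≤ μ ^ n * a + μ⁻¹ ^ n * b) : 0 ≤ a := by
  have hμ0 : 0 < μ := zero_lt_one.trans hμ
  have hlim : Tendsto (fun n : ℕ => a + (μ⁻¹ ^ 2) ^ n * b) atTop (𝓝 a) := by
    have hq : Tendsto (fun n : ℕ => (μ⁻¹ ^ 2) ^ n) atTop (𝓝 0) :=
      tendsto_pow_atTop_nhds_zero_of_lt_one (by positivity)
        (pow_lt_one₀ (by positivity) (inv_lt_one_of_one_lt₀ hμ) two_ne_zero)
    simpa using tendsto_const_nhds.add (hq.mul_const b)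
  refine ge_of_tendsto' hlim fun n => ?_
  have := mul_nonneg (pow_nonneg (inv_nonneg.2 hμ0.le) n) (h n)
  have hpow : μ⁻¹ ^ n * μ ^ n = 1 := by rw [← mul_pow, inv_mul_cancel₀ hμ0.ne', one_pow]
  convert this using 1
  linear_combination (-a) * hpow

lemma inv_add_sqrt_sq_sub_four_div_two {ℓ : ℝ} (hℓ : 2 ≤ ℓ) :
    ((ℓ + √(ℓ ^ 2 - 4)) / 2)⁻¹ = (ℓ - √(ℓ ^ 2 - 4)) / 2 := by
  have hsq : √(ℓ ^ 2 - 4) ^ 2 = ℓ ^ 2 - 4 := Real.sq_sqrt (by nlinarith)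
  refine inv_eq_of_mul_eq_one_right ?_
  linear_combination (-1 / 4) * hsq

local notation "ℝ²" => EuclideanSpace ℝ (Fin 2)

noncomputable def kroneckerMap (ℓ : ℝ) (w : ℝ²) : ℝ² := !₂[ℓ * max (w 0) 0 + w 1, -(w 0)]

def kroneckerCone : Set ℝ² := {w | 0 ≤ w 0 ∧ 0 ≤ w 0 + w 1}

/-- An eigenvector of the linear branch of `kroneckerMap (μ + μ⁻¹)` for the eigenvalue `μ`;
`L₊ = kroneckerEigenvector λ₊` and `L₋ = kroneckerEigenvector λ₋`, with `λ₋ = λ₊⁻¹`. -/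
noncomputable def kroneckerEigenvector (μ : ℝ) : ℝ² := !₂[1, -μ⁻¹]

def nonnegRay (v : ℝ²) : Set ℝ² := {w | ∃ t : ℝ, 0 ≤ t ∧ w = t • v}

section

variable {ℓ μ : ℝ}

@[simp] lemma kroneckerMap_apply_zero (w : ℝ²) : kroneckerMap ℓ w 0 = ℓ * max (w 0) 0 + w 1 := rfl

@[simp] lemma kroneckerMap_apply_one (w : ℝ²) : kroneckerMap ℓ w 1 = -(w 0) := rfl

@[simp] lemma kroneckerEigenvector_apply_zero : kroneckerEigenvector μ 0 = 1 := rfl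

@[simp] lemma kroneckerEigenvector_apply_one : kroneckerEigenvector μ 1 = -μ⁻¹ := rfl

lemma kroneckerEigenvector_ne_zero : kroneckerEigenvector μ ≠ 0 := fun h => by
  simpa using congr($h 0)

lemma mapsTo_kroneckerMap_cone (hℓ : 2 ≤ ℓ) : MapsTo (kroneckerMap ℓ) kroneckerCone kroneckerCone := by
  rintro w ⟨h0, h01⟩
  simp only [kroneckerCone, mem_ofPred_eq, kroneckerMap_apply_zero, kroneckerMap_apply_one,
    max_eq_left h0]
  constructor <;> nlinarith

lemma exists_iterate_kroneckerMap_mem_cone_of_neg {w : ℝ²} (hw : w 0 < 0) :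
    ∃ k, (kroneckerMap ℓ)^[k] w ∈ kroneckerCone := by
  by_cases h1 : 0 ≤ w 1
  · refine ⟨1, show kroneckerMap ℓ w ∈ kroneckerCone from ?_⟩
    simp only [kroneckerCone, mem_ofPred_eq, kroneckerMap_apply_zero, kroneckerMap_apply_one,
      max_eq_right hw.le, mul_zero, zero_add]
    constructor <;> linarith
  · refine ⟨2, show kroneckerMap ℓ (kroneckerMap ℓ w) ∈ kroneckerCone from ?_⟩
    simp only [kroneckerCone, mem_ofPred_eq, kroneckerMap_apply_zero, kroneckerMap_apply_one,
      max_eq_right hw.le, mul_zero, zero_add, max_eq_right (not_le.1 h1).le]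
    constructor <;> linarith

lemma exists_forall_iterate_kroneckerMap_nonneg (hℓ : 2 ≤ ℓ) (w : ℝ²) :
    ∃ N, ∀ n, 0 ≤ (kroneckerMap ℓ)^[n] ((kroneckerMap ℓ)^[N] w) 0 := by
  by_cases h : ∀ k, 0 ≤ (kroneckerMap ℓ)^[k] w 0
  · exact ⟨0, h⟩
  push Not at h
  obtain ⟨k, hk⟩ := h
  obtain ⟨j, hj⟩ := exists_iterate_kroneckerMap_mem_cone_of_neg (ℓ := ℓ) hk
  refine ⟨j + k, fun n => ((mapsTo_kroneckerMap_cone hℓ).iterate n ?_).1⟩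
  rwa [Function.iterate_add_apply]

lemma kroneckerMap_add_smul_kroneckerEigenvector (hμ : μ ≠ 0) {a b : ℝ} (h : 0 ≤ a + b) :
    kroneckerMap (μ + μ⁻¹) (a • kroneckerEigenvector μ + b • kroneckerEigenvector μ⁻¹) =
      (μ * a) • kroneckerEigenvector μ + (μ⁻¹ * b) • kroneckerEigenvector μ⁻¹ := by
  ext i
  fin_cases i
  · simp only [Fin.zero_eta, kroneckerMap_apply_zero, PiLp.add_apply, PiLp.smul_apply,
      kroneckerEigenvector_apply_zero, kroneckerEigenvector_apply_one, smul_eq_mul, mul_one,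
      max_eq_left h, inv_inv]
    field_simp
    ring
  · simp only [Fin.mk_one, kroneckerMap_apply_one, PiLp.add_apply, PiLp.smul_apply,
      kroneckerEigenvector_apply_zero, kroneckerEigenvector_apply_one, smul_eq_mul, mul_one,
      inv_inv]
    field_simp
    ring

lemma iterate_kroneckerMap_add_smul_kroneckerEigenvector (hμ : μ ≠ 0) {a b : ℝ}
    (h : ∀ n, 0 ≤ (kroneckerMap (μ + μ⁻¹))^[n]
      (a • kroneckerEigenvector μ + b • kroneckerEigenvector μ⁻¹) 0) (n : ℕ) :
    (kroneckerMap (μ + μ⁻¹))^[n] (a • kroneckerEigenvector μ + b • kroneckerEigenvector μ⁻¹) =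
      (μ ^ n * a) • kroneckerEigenvector μ + (μ⁻¹ ^ n * b) • kroneckerEigenvector μ⁻¹ := by
  induction n with
  | zero => simp
  | succ n ih =>
    have hn := h n
    rw [ih] at hn
    simp only [PiLp.add_apply, PiLp.smul_apply, kroneckerEigenvector_apply_zero, smul_eq_mul,
      mul_one] at hn
    rw [Function.iterate_succ_apply', ih, kroneckerMap_add_smul_kroneckerEigenvector hμ hn,
      pow_succ', pow_succ', mul_assoc, mul_assoc]

lemma exists_eq_add_smul_kroneckerEigenvector (hμ0 : μ ≠ 0) (hμ : μ ^ 2 ≠ 1) (w : ℝ²) :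
    ∃ a b : ℝ, w = a • kroneckerEigenvector μ + b • kroneckerEigenvector μ⁻¹ := by
  have hsub : μ ^ 2 - 1 ≠ 0 := sub_ne_zero.2 hμ
  refine ⟨μ * (μ * w 0 + w 1) / (μ ^ 2 - 1), w 0 - μ * (μ * w 0 + w 1) / (μ ^ 2 - 1), ?_⟩
  ext i
  fin_cases i
  · simp
  · simp only [Fin.mk_one, PiLp.add_apply, PiLp.smul_apply, kroneckerEigenvector_apply_one,
      smul_eq_mul, inv_inv]
    field_simp
    ring

lemma mem_nonnegRay_of_kroneckerMap_mem (hμ : 0 < μ) {w : ℝ²}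
    (h : kroneckerMap (μ + μ⁻¹) w ∈ nonnegRay (kroneckerEigenvector μ⁻¹)) :
    w ∈ nonnegRay (kroneckerEigenvector μ⁻¹) := by
  obtain ⟨t, ht, hw⟩ := h
  have h0 := congr($hw 0)
  have h1 := congr($hw 1)
  simp only [kroneckerMap_apply_zero, kroneckerMap_apply_one, PiLp.smul_apply,
    kroneckerEigenvector_apply_zero, kroneckerEigenvector_apply_one, inv_inv, smul_eq_mul] at h0 h1
  have hw0 : w 0 = μ * t := by linarith
  refine ⟨μ * t, by positivity, ?_⟩
  ext i
  fin_cases i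
  · simp [hw0]
  · simp only [Fin.mk_one, PiLp.smul_apply, kroneckerEigenvector_apply_one, inv_inv, smul_eq_mul]
    rw [hw0, max_eq_left (by positivity)] at h0
    field_simp at h0
    linear_combination h0

lemma mem_nonnegRay_of_iterate_kroneckerMap_mem (hμ : 0 < μ) {w : ℝ²} (N : ℕ)
    (h : (kroneckerMap (μ + μ⁻¹))^[N] w ∈ nonnegRay (kroneckerEigenvector μ⁻¹)) :
    w ∈ nonnegRay (kroneckerEigenvector μ⁻¹) := by
  induction N generalizing w with
  | zero => exact h
  | succ N ih => exact mem_nonnegRay_of_kroneckerMap_mem hμ (ih h)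

theorem tendsto_normalize_iterate_kroneckerMap (hμ : 1 < μ) {w : ℝ²}
    (hw : w ∉ nonnegRay (kroneckerEigenvector μ⁻¹)) :
    Tendsto (fun n : ℕ => NormedSpace.normalize ((kroneckerMap (μ + μ⁻¹))^[n] w)) atTop
      (𝓝 (NormedSpace.normalize (kroneckerEigenvector μ))) := by
  have hμ0 : 0 < μ := zero_lt_one.trans hμ
  have hinv : μ⁻¹ < μ := (inv_lt_one_of_one_lt₀ hμ).trans hμ
  have hℓ : 2 ≤ μ + μ⁻¹ := by
    have := mul_inv_cancel₀ hμ0.ne'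
    nlinarith [sq_nonneg (μ - 1), inv_pos.2 hμ0]
  obtain ⟨N, hN⟩ := exists_forall_iterate_kroneckerMap_nonneg hℓ w
  obtain ⟨a, b, hab⟩ := exists_eq_add_smul_kroneckerEigenvector hμ0.ne'
    (one_lt_pow₀ hμ two_ne_zero).ne' ((kroneckerMap (μ + μ⁻¹))^[N] w)
  rw [hab] at hN
  have horbit := iterate_kroneckerMap_add_smul_kroneckerEigenvector hμ0.ne' hN
  have ha : 0 ≤ a := nonneg_of_forall_nonneg_pow_mul_add hμ fun n => by
    simpa [horbit n] using hN n
  rcases ha.eq_or_lt with rfl | ha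
  · refine absurd (mem_nonnegRay_of_iterate_kroneckerMap_mem hμ0 N ⟨b, ?_, by simp [hab]⟩) hw
    simpa using hN 0
  · have hlim := tendsto_normalize_pow_smul_add_pow_smul
      (smul_ne_zero ha.ne' (kroneckerEigenvector_ne_zero (μ := μ))) (b • kroneckerEigenvector μ⁻¹)
      (show |μ⁻¹| < μ by rwa [abs_of_pos (inv_pos.2 hμ0)])
    rw [NormedSpace.normalize_smul_of_pos ha] at hlim
    refine (tendsto_add_atTop_iff_nat N).mp (hlim.congr fun n => ?_)
    rw [Function.iterate_add_apply, hab, horbit n, smul_smul, smul_smul]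

end

/-- North–South dynamics (attracting half) of the Kronecker mutation loop for `ℓ > 2`:
the normalized iterates of every point off the ray `ℝ≥0·L₋` converge to the unit vector
in the direction of `L₊` (Euclidean norm on `ℝ²`). -/
theorem stmt_17 (ℓ : ℤ) (hℓ : 2 < ℓ)
    (F : EuclideanSpace ℝ (Fin 2) → EuclideanSpace ℝ (Fin 2))
    (hF : ∀ w : EuclideanSpace ℝ (Fin 2),
      F w 0 = (ℓ : ℝ) * max (w 0) 0 + w 1 ∧ F w 1 = -(w 0))
    (Lp Lm : EuclideanSpace ℝ (Fin 2))
    (hLp0 : Lp 0 = 1) (hLp1 : Lp 1 = (-(ℓ : ℝ) + Real.sqrt ((ℓ : ℝ) ^ 2 - 4)) / 2)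
    (hLm0 : Lm 0 = 1) (hLm1 : Lm 1 = (-(ℓ : ℝ) - Real.sqrt ((ℓ : ℝ) ^ 2 - 4)) / 2) :
    ∀ w : EuclideanSpace ℝ (Fin 2), (¬ ∃ t : ℝ, 0 ≤ t ∧ w = t • Lm) →
      Tendsto (fun n : ℕ => ‖F^[n] w‖⁻¹ • F^[n] w) atTop (𝓝 (‖Lp‖⁻¹ • Lp)) := by
  intro w hw
  have hℓR : (2 : ℝ) < ℓ := by exact_mod_cast hℓ
  set μ := ((ℓ : ℝ) + √((ℓ : ℝ) ^ 2 - 4)) / 2 with hμ_def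
  have hμ : 1 < μ := by linarith [Real.sqrt_nonneg ((ℓ : ℝ) ^ 2 - 4)]
  have hμinv := inv_add_sqrt_sq_sub_four_div_two hℓR.le
  rw [← hμ_def] at hμinv
  have hFμ : F = kroneckerMap (μ + μ⁻¹) := by
    have hℓμ : μ + μ⁻¹ = ℓ := by rw [hμinv, hμ_def]; ring
    funext v
    ext i
    fin_cases i
    · simp [(hF v).1, hℓμ]
    · simp [(hF v).2]
  have hLp : Lp = kroneckerEigenvector μ := by
    ext i; fin_cases i
    · simp [hLp0]
    · simp only [Fin.mk_one, hLp1, kroneckerEigenvector_apply_one, hμinv]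
      ring
  have hLm : Lm = kroneckerEigenvector μ⁻¹ := by
    ext i; fin_cases i
    · simp [hLm0]
    · simp only [Fin.mk_one, hLm1, kroneckerEigenvector_apply_one, inv_inv]
      ring
  subst hFμ hLp hLm
  exact tendsto_normalize_iterate_kroneckerMap hμ hw
end
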